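/- arXiv:1903.02628 — 2 statements merged into one kernel-verified Lean document; each statement's English description precedes it below -/
import Mathlib

section
/- Let V = R Rᵀ ⪰ 0 with R ∈ ℝ^{n×r} of full column rank r, and let Z be symmetric with largest eigenvalue λ_max > 0. Then the updated matrix V' = R (I − λ_max⁻¹ Z) Rᵀ is positive semidefinite with rank(V') ≤ r − 1, i.e., the rank reduction step reduces the rank of V by at least one. -/
open Matrix

theorem stmt_8 (n r : ℕ) (R : Matrix (Fin n) (Fin r) ℝ) (hR : R.rank = r)
    (Z : Matrix (Fin r) (Fin r) ℝ) (hZ : Z.IsSymm)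
    (lmax : ℝ) (hpos : 0 < lmax)
    (hev : ∃ v : Fin r → ℝ, v ≠ 0 ∧ Z *ᵥ v = lmax • v)
    (hmax : ∀ (μ : ℝ) (v : Fin r → ℝ), v ≠ 0 → Z *ᵥ v = μ • v → μ ≤ lmax)
    (V : Matrix (Fin n) (Fin n) ℝ) (hV : V = R * Rᵀ) :
    (R * (1 - lmax⁻¹ • Z) * Rᵀ).PosSemidef ∧
    (R * (1 - lmax⁻¹ • Z) * Rᵀ).rank ≤ r - 1 := by
  set M : Matrix (Fin r) (Fin r) ℝ := 1 - lmax⁻¹ • Z with hM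
  have hZH : Z.IsHermitian := by
    rw [Matrix.IsHermitian]
    ext i j
    simpa using congrFun (congrFun hZ i) j
  have hMH : M.IsHermitian := by
    rw [Matrix.IsHermitian]
    ext i j
    simp only [hM, Matrix.conjTranspose_apply, Matrix.sub_apply, Matrix.smul_apply,
      Matrix.one_apply, star_sub, star_smul, star_one, smul_eq_mul, star_mul']
    have := congrFun (congrFun hZ j) i
    simp only [Matrix.transpose_apply] at this
    simp [this, eq_comm, mul_comm]
  -- M is PSD via eigenvalues
  have hMpsd : M.PosSemidef := by
    apply hMH.posSemidef_iff_eigenvalues_nonneg.mpr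
    intro i
    set w : Fin r → ℝ := ⇑(hMH.eigenvectorBasis i) with hw
    have hwne : w ≠ 0 := by
      have := hMH.eigenvectorBasis.orthonormal.ne_zero i
      intro h
      apply this
      ext j
      exact congrFun h j
    have hmw : M *ᵥ w = hMH.eigenvalues i • w := hMH.mulVec_eigenvectorBasis i
    set μ := hMH.eigenvalues i
    have hZw : Z *ᵥ w = (lmax * (1 - μ)) • w := by
      have h1 : (1 : Matrix (Fin r) (Fin r) ℝ) *ᵥ w - lmax⁻¹ • (Z *ᵥ w) = μ • w := by
        rw [← Matrix.smul_mulVec, ← Matrix.sub_mulVec]; exact hmw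
      rw [Matrix.one_mulVec] at h1
      have h2 : lmax⁻¹ • (Z *ᵥ w) = w - μ • w := by
        rw [← h1]; abel
      have h3 : Z *ᵥ w = lmax • (w - μ • w) := by
        rw [← h2, smul_smul, mul_inv_cancel₀ hpos.ne', one_smul]
      rw [h3, smul_sub, smul_smul, ← sub_smul, ← mul_one_sub]
    have := hmax (lmax * (1 - μ)) w hwne hZw
    rw [Pi.zero_apply]; nlinarith
  constructor
  · have := hMpsd.mul_mul_conjTranspose_same R
    simpa using this
  · -- rank bound
    have hrank1 : (R * M * Rᵀ).rank ≤ M.rank :=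
      le_trans (Matrix.rank_mul_le_left (R * M) Rᵀ) (Matrix.rank_mul_le_right R M)
    refine le_trans hrank1 ?_
    -- M has nontrivial kernel
    obtain ⟨v, hv, hZv⟩ := hev
    have hMv : M *ᵥ v = 0 := by
      rw [hM, Matrix.sub_mulVec, Matrix.one_mulVec, Matrix.smul_mulVec, hZv,
        smul_smul, inv_mul_cancel₀ hpos.ne', one_smul, sub_self]
    have hker : 0 < Module.finrank ℝ (LinearMap.ker M.mulVecLin) := by
      have hnt : Nontrivial (LinearMap.ker M.mulVecLin) := by
        refine nontrivial_of_ne ⟨v, by simpa [Matrix.mulVecLin] using hMv⟩ 0 ?_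
        intro h
        exact hv (by simpa using congrArg Subtype.val h)
      exact Module.finrank_pos
    have hsum := LinearMap.finrank_range_add_finrank_ker M.mulVecLin
    have hdim : Module.finrank ℝ (Fin r → ℝ) = r := by simp
    rw [hdim] at hsum
    have : M.rank = Module.finrank ℝ (LinearMap.range M.mulVecLin) := rfl
    omega
end

section
/- Any extreme point V* of the feasible set of a semidefinite program with m linear equality/inequality constraints satisfies rank(V*)(rank(V*)+1)/2 ≤ m; equivalently, rank(V*) ≤ ⌊(√(8m+1) − 1)/2⌋. -/
open Matrix

/-- Frobenius (trace) inner product of real matrices. -/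
noncomputable def frob {n m : Type*} [Fintype n] [Fintype m]
    (A B : Matrix n m ℝ) : ℝ := (Aᵀ * B).trace


lemma frob_add {n : Type*} [Fintype n] (A M N : Matrix n n ℝ) :
    frob A (M + N) = frob A M + frob A N := by
  simp [frob, mul_add]

lemma frob_sub {n : Type*} [Fintype n] (A M N : Matrix n n ℝ) :
    frob A (M - N) = frob A M - frob A N := by
  simp [frob, mul_sub]

lemma frob_smul {n : Type*} [Fintype n] (A M : Matrix n n ℝ) (c : ℝ) :
    frob A (c • M) = c * frob A M := by
  simp [frob, Matrix.mul_smul]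

lemma card_le_pairs (α : Type*) [Fintype α] [LinearOrder α] :
    Fintype.card {p : α × α // p.1 ≤ p.2} * 2 = Fintype.card α * (Fintype.card α + 1) := by
  classical
  set s := Finset.univ.filter (fun p : α × α => p.1 ≤ p.2) with hs
  set t := Finset.univ.filter (fun p : α × α => p.2 ≤ p.1) with ht
  have hust : s ∪ t = Finset.univ := by
    ext p; simp [hs, ht, le_total p.1 p.2]
  have hist : s ∩ t = Finset.univ.image (fun a : α => (a, a)) := by
    ext p
    simp only [hs, ht, Finset.mem_inter, Finset.mem_filter, Finset.mem_univ, true_and,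
      Finset.mem_image]
    constructor
    · rintro ⟨h1, h2⟩
      exact ⟨p.1, Prod.ext_iff.mpr ⟨rfl, le_antisymm h1 h2⟩⟩
    · rintro ⟨a, -, rfl⟩
      exact ⟨le_refl _, le_refl _⟩
  have hts : t.card = s.card := by
    apply Finset.card_bij' (fun p _ => Prod.swap p) (fun p _ => Prod.swap p) <;>
      simp [hs, ht]
  have hdiag : (Finset.univ.image (fun a : α => (a, a))).card = Fintype.card α := by
    rw [Finset.card_image_of_injective _ (fun a b h => (Prod.ext_iff.mp h).1)]
    simp
  have h := Finset.card_union_add_card_inter s t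
  rw [hust, hist, hts, hdiag, Finset.card_univ, Fintype.card_prod] at h
  rw [Fintype.card_subtype]
  have hfs : Finset.filter (fun x : α × α => x.1 ≤ x.2) Finset.univ = s := by
    ext p; simp [hs]
  rw [hfs]
  have hx : Fintype.card α * (Fintype.card α + 1)
      = Fintype.card α * Fintype.card α + Fintype.card α := by ring
  omega


lemma abs_mul_le_half_sq (a b : ℝ) : |a * b| ≤ (a ^ 2 + b ^ 2) / 2 := by
  rcases abs_cases (a * b) with ⟨h, -⟩ | ⟨h, -⟩ <;> rw [h] <;>
    nlinarith [sq_nonneg (a - b), sq_nonneg (a + b)]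

lemma abs_quad_le {α : Type*} [Fintype α] (W : Matrix α α ℝ) (x : α → ℝ) :
    |∑ i, ∑ j, x i * W i j * x j| ≤ (∑ i, ∑ j, |W i j|) * (∑ k, x k ^ 2) := by
  classical
  set S := ∑ k, x k ^ 2 with hS
  have hS0 : 0 ≤ S := Finset.sum_nonneg fun k _ => sq_nonneg _
  have hterm : ∀ i j : α, |x i * W i j * x j| ≤ |W i j| * S := by
    intro i j
    have h1 : x i ^ 2 ≤ S := Finset.single_le_sum (fun k _ => sq_nonneg (x k)) (Finset.mem_univ i)
    have h2 : x j ^ 2 ≤ S := Finset.single_le_sum (fun k _ => sq_nonneg (x k)) (Finset.mem_univ j)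
    have h3 : |x i * x j| ≤ S := le_trans (abs_mul_le_half_sq _ _) (by linarith)
    calc |x i * W i j * x j| = |W i j| * |x i * x j| := by
            rw [← abs_mul]; ring_nf
      _ ≤ |W i j| * S := mul_le_mul_of_nonneg_left h3 (abs_nonneg _)
  calc |∑ i, ∑ j, x i * W i j * x j| ≤ ∑ i, |∑ j, x i * W i j * x j| :=
        Finset.abs_sum_le_sum_abs _ _
    _ ≤ ∑ i, ∑ j, |x i * W i j * x j| :=
        Finset.sum_le_sum fun i _ => Finset.abs_sum_le_sum_abs _ _
    _ ≤ ∑ i, ∑ j, |W i j| * S :=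
        Finset.sum_le_sum fun i _ => Finset.sum_le_sum fun j _ => hterm i j
    _ = (∑ i, ∑ j, |W i j|) * S := by rw [Finset.sum_mul]; congr 1; ext i; rw [Finset.sum_mul]

lemma diag_perturb {α : Type*} [Fintype α] [DecidableEq α] [Nonempty α]
    (ν : α → ℝ) (hν : ∀ a, 0 < ν a) (W : Matrix α α ℝ) (hW : W.IsHermitian) :
    ∃ ε : ℝ, 0 < ε ∧ ∀ s : ℝ, |s| ≤ ε → (diagonal ν + s • W).PosSemidef := by
  classical
  set C := ∑ i, ∑ j, |W i j| with hCdef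
  have hC : 0 ≤ C := Finset.sum_nonneg fun i _ => Finset.sum_nonneg fun j _ => abs_nonneg _
  set δ := Finset.univ.inf' Finset.univ_nonempty ν with hδdef
  obtain ⟨a, -, ha⟩ := Finset.exists_mem_eq_inf' (Finset.univ_nonempty) ν
  have hδ : 0 < δ := by rw [hδdef, ha]; exact hν a
  have hδle : ∀ b, δ ≤ ν b := fun b => Finset.inf'_le _ (Finset.mem_univ b)
  set ε := δ / (C + 1) with hεdef
  have hε : 0 < ε := by positivity
  have hεδ : ε * (C + 1) = δ := div_mul_cancel₀ _ (by positivity)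
  refine ⟨ε, hε, fun s hs => ?_⟩
  rw [Matrix.posSemidef_iff_dotProduct_mulVec]
  constructor
  · show (diagonal ν + s • W)ᴴ = _
    rw [conjTranspose_add, conjTranspose_smul, hW.eq, (isHermitian_diagonal ν).eq, star_trivial]
  · intro x
    have hstar : star x = x := by funext i; simp
    rw [hstar]
    have hexp : x ⬝ᵥ (diagonal ν + s • W) *ᵥ x
        = (∑ i, ν i * x i ^ 2) + s * ∑ i, ∑ j, x i * W i j * x j := by
      rw [add_mulVec, dotProduct_add, smul_mulVec, dotProduct_smul]
      congr 1
      · simp [dotProduct, mulVec_diagonal]; apply Finset.sum_congr rfl; intro i _; ring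
      · rw [smul_eq_mul]; congr 1
        simp [dotProduct, mulVec, Finset.mul_sum]; apply Finset.sum_congr rfl; intro i _
        apply Finset.sum_congr rfl; intro j _; ring
    rw [hexp]
    set S := ∑ k, x k ^ 2 with hS
    have hS0 : 0 ≤ S := Finset.sum_nonneg fun k _ => sq_nonneg _
    set Q := ∑ i, ∑ j, x i * W i j * x j with hQ
    have hT : δ * S ≤ ∑ i, ν i * x i ^ 2 := by
      rw [Finset.mul_sum]
      exact Finset.sum_le_sum fun i _ => mul_le_mul_of_nonneg_right (hδle i) (sq_nonneg _)
    have hQle : |Q| ≤ C * S := abs_quad_le W x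
    have habs : |s * Q| ≤ ε * (C * S) := by
      rw [abs_mul]
      exact mul_le_mul hs hQle (abs_nonneg _) hε.le
    have h1 : -(ε * (C * S)) ≤ s * Q := by
      have := neg_abs_le (s * Q); linarith
    nlinarith [mul_nonneg hε.le hS0]

lemma key {n : ℕ} {ι : Type*} [Fintype ι] (C : ι → Matrix (Fin n) (Fin n) ℝ)
    (V : Matrix (Fin n) (Fin n) ℝ) (hV : V.PosSemidef)
    (h : Fintype.card ι * 2 < V.rank * (V.rank + 1)) :
    ∃ E, E ≠ 0 ∧ (V + E).PosSemidef ∧ (V - E).PosSemidef ∧ ∀ i, frob (C i) E = 0 := by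
  classical
  have hH := hV.isHermitian
  set μ : Fin n → ℝ := hH.eigenvalues with hμdef
  set U : Matrix (Fin n) (Fin n) ℝ := (hH.eigenvectorUnitary : Matrix (Fin n) (Fin n) ℝ) with hUdef
  have hUU : star U * U = 1 := Matrix.mem_unitaryGroup_iff'.mp hH.eigenvectorUnitary.2
  set t := {i : Fin n // μ i ≠ 0} with htdef
  have hcard : Fintype.card t = V.rank :=
    (hH.rank_eq_card_non_zero_eigs).symm
  have htne : Nonempty t := by
    rcases isEmpty_or_nonempty t with he | hne
    · exfalso
      have h0 : Fintype.card t = 0 := Fintype.card_eq_zero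
      rw [← hcard, h0] at h
      simp at h
    · exact hne
  set P : Matrix (Fin n) t ℝ := fun j a => U j a.val with hPdef
  have hPtP : Pᵀ * P = 1 := by
    ext a b
    have h1 := congrFun (congrFun hUU a.val) b.val
    simp only [Matrix.mul_apply, Matrix.one_apply, Matrix.star_apply, star_trivial] at h1 ⊢
    simp only [hPdef, transpose_apply]
    show ∑ x, U x a.val * U x b.val = _
    rw [h1]
    by_cases hab : a = b
    · simp [hab]
    · rw [if_neg hab, if_neg (fun hv => hab (Subtype.ext hv))]
  have hνpos : ∀ a : t, 0 < μ a.val := fun a =>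
    lt_of_le_of_ne (hV.eigenvalues_nonneg a.val) (Ne.symm a.2)
  set D : Matrix t t ℝ :=
    diagonal (fun a => μ a.val) with hDdef
  have hVPDP : V = P * D * Pᵀ := by
    have hspec := hH.spectral_theorem
    rw [Unitary.conjStarAlgAut_apply] at hspec
    ext j k
    have hjk := congrFun (congrFun hspec j) k
    rw [← hUdef] at hjk
    rw [hjk]
    have hL : (U * (Matrix.diagonal (RCLike.ofReal ∘ hH.eigenvalues) : Matrix (Fin n) (Fin n) ℝ) * star U) j k
        = ∑ i : Fin n, U j i * μ i * U k i := by
      simp only [Matrix.mul_apply, Matrix.diagonal_apply, Matrix.star_apply, star_trivial,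
        Function.comp_apply, RCLike.ofReal_real_eq_id, id_eq, mul_ite, mul_zero, ite_mul,
        zero_mul, Finset.sum_ite_eq', Finset.mem_univ, if_true]
      rfl
    have hR : (P * D * Pᵀ) j k = ∑ a : t, U j a.val * μ a.val * U k a.val := by
      show ∑ c : t, (∑ d : t, U j d.val * D d c) * U k c.val = _
      simp only [Matrix.mul_apply, Matrix.diagonal_apply, transpose_apply, hDdef, hPdef,
        mul_ite, mul_zero, ite_mul, zero_mul, Finset.sum_ite_eq', Finset.mem_univ, if_true]
      refine Finset.sum_congr rfl fun c _ => ?_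
      exact congrArg (· * U k c.val) ((Finset.sum_ite_eq' _ _ _).trans (if_pos (Finset.mem_univ c)))
    rw [hL, hR]
    have h1 : ∑ x ∈ Finset.univ.filter (fun i : Fin n => μ i ≠ 0), (U j x * μ x * U k x)
        = ∑ a : t, U j a.val * μ a.val * U k a.val :=
      Finset.sum_subtype _ (by simp) _
    have h2 : ∑ x ∈ Finset.univ.filter (fun i : Fin n => μ i ≠ 0), (U j x * μ x * U k x)
        = ∑ i : Fin n, U j i * μ i * U k i :=
      Finset.sum_filter_of_ne (fun x _ hx => by
        intro h0
        apply hx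
        rw [h0, mul_zero, zero_mul])
    rw [← h1, h2]
  set symF : ({p : t × t // p.1 ≤ p.2} → ℝ) → Matrix t t ℝ :=
    fun x a b => if h : a ≤ b then x ⟨(a, b), h⟩ else x ⟨(b, a), (not_le.mp h).le⟩ with hsymF
  have hsym_add : ∀ x y, symF (x + y) = symF x + symF y := by
    intro x y
    funext a b
    show (if h : a ≤ b then (x + y) ⟨(a, b), h⟩ else (x + y) ⟨(b, a), (not_le.mp h).le⟩) = (if h : a ≤ b then x ⟨(a, b), h⟩ else x ⟨(b, a), (not_le.mp h).le⟩) + (if h : a ≤ b then y ⟨(a, b), h⟩ else y ⟨(b, a), (not_le.mp h).le⟩)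
    split_ifs <;> rfl
  have hsym_smul : ∀ (c : ℝ) x, symF (c • x) = c • symF x := by
    intro c x
    funext a b
    show (if h : a ≤ b then (c • x) ⟨(a, b), h⟩ else (c • x) ⟨(b, a), (not_le.mp h).le⟩) = c • (if h : a ≤ b then x ⟨(a, b), h⟩ else x ⟨(b, a), (not_le.mp h).le⟩)
    split_ifs <;> rfl
  have hsym_herm : ∀ x, (symF x).IsHermitian := by
    intro x
    refine Matrix.IsHermitian.ext fun a b => ?_
    rw [star_trivial]
    show symF x b a = symF x a b
    simp only [hsymF]
    split_ifs with h1 h2 h2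
    · have hba : b = a := le_antisymm h1 h2
      subst hba; rfl
    · rfl
    · rfl
    · exact absurd (le_total b a) (by simp [h1, h2])
  set L : ({p : t × t // p.1 ≤ p.2} → ℝ) →ₗ[ℝ] (ι → ℝ) :=
    { toFun := fun x i => frob (C i) (P * symF x * Pᵀ)
      map_add' := by
        intro x y
        funext i
        rw [hsym_add, Matrix.mul_add, Matrix.add_mul, frob_add]
        rfl
      map_smul' := by
        intro c x
        funext i
        rw [hsym_smul, Matrix.mul_smul, Matrix.smul_mul, frob_smul]
        rfl } with hL
  have hcardτ : Fintype.card ι < Fintype.card {p : t × t // p.1 ≤ p.2} := by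
    have hcp := card_le_pairs t
    rw [hcard] at hcp
    omega
  have hnotinj : ¬ Function.Injective L := by
    intro hinj
    have hle := LinearMap.finrank_le_finrank_of_injective hinj
    rw [Module.finrank_fintype_fun_eq_card, Module.finrank_fintype_fun_eq_card] at hle
    omega
  obtain ⟨x1, x2, hx12, hne⟩ : ∃ a b, L a = L b ∧ a ≠ b := by
    simpa [Function.Injective, not_forall] using hnotinj
  set x := x1 - x2 with hx
  have hx0 : x ≠ 0 := sub_ne_zero.mpr hne
  have hLx : L x = 0 := by rw [hx, map_sub, hx12, sub_self]
  set W := symF x with hWdef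
  have hWH : W.IsHermitian := hsym_herm x
  have hWne : W ≠ 0 := by
    intro h0
    apply hx0
    funext q
    obtain ⟨⟨a, b⟩, hab⟩ := q
    have hq := congrFun (congrFun h0 a) b
    simp only [hWdef, hsymF, Matrix.zero_apply, dif_pos hab] at hq
    exact hq
  have hker : ∀ i, frob (C i) (P * W * Pᵀ) = 0 := fun i => congrFun hLx i
  obtain ⟨ε, hε, hpert⟩ := diag_perturb (fun a : t => μ a.val) hνpos W hWH
  have hPH : Pᴴ = Pᵀ := by
    ext a b
    simp [conjTranspose_apply]
  refine ⟨P * (ε • W) * Pᵀ, ?_, ?_, ?_, ?_⟩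
  · intro h0
    have hcalc : Pᵀ * (P * (ε • W) * Pᵀ) * P = (Pᵀ * P) * (ε • W) * (Pᵀ * P) := by
      simp only [Matrix.mul_assoc]
    rw [h0, Matrix.mul_zero, Matrix.zero_mul, hPtP, Matrix.one_mul, Matrix.mul_one] at hcalc
    exact smul_ne_zero (ne_of_gt hε) hWne hcalc.symm
  · have hps := (hpert ε (by rw [abs_of_pos hε])).mul_mul_conjTranspose_same P
    rw [hPH] at hps
    have heq : V + P * (ε • W) * Pᵀ = P * (Matrix.diagonal (fun a : t => μ a.val) + ε • W) * Pᵀ := by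
      rw [hVPDP, Matrix.mul_add, Matrix.add_mul, hDdef]
    rw [heq]
    exact hps
  · have hps := (hpert (-ε) (by rw [abs_neg, abs_of_pos hε])).mul_mul_conjTranspose_same P
    rw [hPH] at hps
    have heq : V - P * (ε • W) * Pᵀ
        = P * (Matrix.diagonal (fun a : t => μ a.val) + (-ε) • W) * Pᵀ := by
      rw [neg_smul, ← sub_eq_add_neg, Matrix.mul_sub, Matrix.sub_mul, hVPDP, hDdef]
    rw [heq]
    exact hps
  · intro i
    rw [Matrix.mul_smul, Matrix.smul_mul, frob_smul, hker i, mul_zero]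

/-- Barvinok–Pataki bound: extreme points of a spectrahedron described by
`me` linear equality and `mi` linear inequality constraints have low rank. -/
theorem stmt_11 (n me mi : ℕ)
    (A : Fin me → Matrix (Fin n) (Fin n) ℝ) (b : Fin me → ℝ)
    (B : Fin mi → Matrix (Fin n) (Fin n) ℝ) (c : Fin mi → ℝ)
    (S : Set (Matrix (Fin n) (Fin n) ℝ))
    (hS : S = {V | V.PosSemidef ∧ (∀ i, frob (A i) V = b i) ∧ ∀ i, frob (B i) V ≤ c i})
    (V : Matrix (Fin n) (Fin n) ℝ) (hV : V ∈ Set.extremePoints ℝ S) :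
    V.rank * (V.rank + 1) / 2 ≤ me + mi ∧
    V.rank ≤ ⌊(Real.sqrt (8 * (me + mi) + 1) - 1) / 2⌋ := by
  obtain ⟨hVS, hext⟩ := hV
  have hpsd : V.PosSemidef := by rw [hS] at hVS; exact hVS.1
  have hb : ∀ i, frob (A i) V = b i := by rw [hS] at hVS; exact hVS.2.1
  have hc : ∀ i, frob (B i) V ≤ c i := by rw [hS] at hVS; exact hVS.2.2
  have key1 : V.rank * (V.rank + 1) ≤ (me + mi) * 2 := by
    by_contra hlt
    push_neg at hlt
    have hcard : Fintype.card (Fin me ⊕ Fin mi) = me + mi := by simp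
    obtain ⟨E, hE0, hplus, hminus, hfrob⟩ := key (Sum.elim A B) V hpsd (by rw [hcard]; exact hlt)
    have hVp : V + E ∈ S := by
      rw [hS]
      refine ⟨hplus, fun i => ?_, fun i => ?_⟩
      · rw [frob_add, (show frob (A i) E = 0 from hfrob (Sum.inl i)), add_zero]; exact hb i
      · rw [frob_add, (show frob (B i) E = 0 from hfrob (Sum.inr i)), add_zero]; exact hc i
    have hVm : V - E ∈ S := by
      rw [hS]
      refine ⟨hminus, fun i => ?_, fun i => ?_⟩
      · rw [frob_sub, (show frob (A i) E = 0 from hfrob (Sum.inl i)), sub_zero]; exact hb i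
      · rw [frob_sub, (show frob (B i) E = 0 from hfrob (Sum.inr i)), sub_zero]; exact hc i
    have hmid : V ∈ openSegment ℝ (V - E) (V + E) :=
      ⟨1/2, 1/2, by norm_num, by norm_num, by norm_num, by module⟩
    have hres := hext hVm hVp hmid
    exact hE0 (by
      have h2 := hres
      rwa [sub_eq_self] at h2)
  refine ⟨by omega, ?_⟩
  rw [Int.le_floor]
  have hr : ((V.rank : ℝ) * (V.rank + 1)) ≤ (me + mi) * 2 := by exact_mod_cast key1
  have hsq : (2 * (V.rank : ℝ) + 1) ≤ Real.sqrt (8 * (me + mi) + 1) := by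
    rw [show (8 * ((me : ℝ) + mi) + 1) = (8 * ((me : ℝ) + mi) + 1) from rfl]
    rw [← Real.sqrt_sq (by positivity : (0:ℝ) ≤ 2 * (V.rank : ℝ) + 1)]
    apply Real.sqrt_le_sqrt
    nlinarith [hr]
  push_cast
  nlinarith [hsq]
end
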